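/- Let E ⊆ ℂ^m and F ⊆ ℂ^n. Then the product E × F ⊆ ℂ^m × ℂ^n = ℂ^{m+n} is non-thin at ∞ if and only if both E is non-thin at ∞ in ℂ^m and F is non-thin at ∞ in ℂ^n. -/

import Mathlib

open Filter Metric

noncomputable section

/-- An upper semicontinuous `EReal`-valued function `u` (never `+∞`) on `U ⊆ ℂ` is
*subharmonic* on `U` if it satisfies the harmonic-polynomial maximum criterion:
whenever `u ≤ Re p` on a circle contained (with its disc) in `U`, for a complex
polynomial `p`, then `u ≤ Re p` throughout the corresponding closed disc. -/
def SubharmonicOn' (u : ℂ → EReal) (U : Set ℂ) : Prop :=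
  UpperSemicontinuousOn u U ∧ (∀ z ∈ U, u z < ⊤) ∧
  ∀ (c : ℂ) (r : ℝ), 0 < r → closedBall c r ⊆ U →
    ∀ p : Polynomial ℂ,
      (∀ z ∈ sphere c r, u z ≤ ((p.eval z).re : EReal)) →
      ∀ z ∈ closedBall c r, u z ≤ ((p.eval z).re : EReal)

/-- A function `u : ℂ^m → [-∞,∞)` is *plurisubharmonic* on `U` if it is upper
semicontinuous on `U`, nowhere `+∞` on `U`, and its restriction to every complex
line is subharmonic. -/
def PshOn {m : ℕ} (u : EuclideanSpace ℂ (Fin m) → EReal)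
    (U : Set (EuclideanSpace ℂ (Fin m))) : Prop :=
  UpperSemicontinuousOn u U ∧ (∀ z ∈ U, u z < ⊤) ∧
  ∀ (a b : EuclideanSpace ℂ (Fin m)), b ≠ 0 →
    SubharmonicOn' (fun w => u (a + w • b)) {w : ℂ | a + w • b ∈ U}

/-- The class `𝕃` of plurisubharmonic functions on `ℂ^m` of minimal growth:
`u(z) - log |z| ≤ O(1)` as `|z| → ∞`. -/
def MinGrowth {m : ℕ} (u : EuclideanSpace ℂ (Fin m) → EReal) : Prop :=
  PshOn u Set.univ ∧ ∃ C R₀ : ℝ, ∀ z, R₀ ≤ ‖z‖ → u z ≤ ((Real.log ‖z‖ + C : ℝ) : EReal)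

/-- The pluricomplex Green function (Siciak extremal function) of `E ⊆ ℂ^m`:
`V_E(z) = sup { u(z) : u ∈ 𝕃, u ≤ 0 on E }`. -/
def greenFn {m : ℕ} (E : Set (EuclideanSpace ℂ (Fin m)))
    (z : EuclideanSpace ℂ (Fin m)) : EReal :=
  sSup ((fun u => u z) '' {u | MinGrowth u ∧ ∀ x ∈ E, u x ≤ 0})

/-- The upper semicontinuous regularization `V_E*` of the Green function. -/
def greenFnStar {m : ℕ} (E : Set (EuclideanSpace ℂ (Fin m)))
    (z : EuclideanSpace ℂ (Fin m)) : EReal :=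
  Filter.limsup (greenFn E) (nhds z)

/-- `E ⊆ ℂ^m` is non-thin at `∞` if `lim_{R→∞} V_{E_R}(z) = 0` for all `z ∈ ℂ^m`,
where `E_R = E ∩ {|z| ≤ R}`. -/
def NonthinAtInfty {m : ℕ} (E : Set (EuclideanSpace ℂ (Fin m))) : Prop :=
  ∀ z, Tendsto (fun R : ℝ => greenFn (E ∩ closedBall 0 R) z) atTop (nhds (0 : EReal))

/-- `A ⊆ ℂ^m` is pluripolar if `A ⊆ {u = -∞}` for some plurisubharmonic `u ≢ -∞` on `ℂ^m`. -/
def Pluripolar {m : ℕ} (A : Set (EuclideanSpace ℂ (Fin m))) : Prop :=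
  ∃ u : EuclideanSpace ℂ (Fin m) → EReal, PshOn u Set.univ ∧ (∃ z, u z ≠ ⊥) ∧ ∀ a ∈ A, u a = ⊥

/-- The Robin constant `γ(K) = limsup_{z→∞} [V_K*(z) - log |z|]`.  The
`ℂ^m`-capacity is `C(K) = e^{-γ(K)}`, so that `log C(K) = -γ(K)`. -/
def robinConst {m : ℕ} (K : Set (EuclideanSpace ℂ (Fin m))) : EReal :=
  Filter.limsup (fun z => greenFnStar K z - ((Real.log ‖z‖ : ℝ) : EReal))
    (Bornology.cobounded (EuclideanSpace ℂ (Fin m)))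

/-- The product `E × F ⊆ ℂ^m × ℂ^n`, viewed inside `ℂ^{m+n}` via coordinates. -/
def prodSet {m n : ℕ} (E : Set (EuclideanSpace ℂ (Fin m)))
    (F : Set (EuclideanSpace ℂ (Fin n))) : Set (EuclideanSpace ℂ (Fin (m + n))) :=
  {z | WithLp.toLp 2 (fun i => z (Fin.castAdd n i)) ∈ E ∧ WithLp.toLp 2 (fun j => z (Fin.natAdd m j)) ∈ F}

/-! Pulling a function of `𝕃` back along an affine map keeps it in `𝕃`: plurisubharmonicity
restricts to complex lines, and the logarithmic growth survives because an upper semicontinuous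
function is bounded above on compact sets. Pulling back along the projection `ℂ^{m+n} → ℂ^m`
gives `V_E(z) ≤ V_{E×F}(z, w)`. Restricting a competitor `u` for `V_{E×F}` first to the slices
`ℂ^m × {w'}`, `w' ∈ F`, and then to `{z} × ℂ^n` gives `V_{E×F}(z, w) ≤ V_E(z) + V_F(w)`.
As `(E × F)_R` lies between `E_{R/2} × F_{R/2}` and `E_R × F_R`, the two limits compare. -/

open EuclideanSpace

namespace EReal

lemma sub_coe_le_iff {a b : EReal} {ε : ℝ} : a - ε ≤ b ↔ a ≤ b + ε :=
  sub_le_iff_le_add (.inl (coe_ne_bot ε)) (.inl (coe_ne_top ε))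

lemma sub_coe_lt_iff {a b : EReal} {ε : ℝ} : a - ε < b ↔ a < b + ε :=
  sub_lt_iff (.inl (coe_ne_bot ε)) (.inl (coe_ne_top ε))

end EReal

lemma UpperSemicontinuousOn.sub_coe {α : Type*} [TopologicalSpace α] {f : α → EReal}
    {s : Set α} (hf : UpperSemicontinuousOn f s) (ε : ℝ) :
    UpperSemicontinuousOn (fun x => f x - ε) s := fun x hx y hy => by
  filter_upwards [hf x hx (y + ε) (EReal.sub_coe_lt_iff.1 hy)] with x' hx'
  exact EReal.sub_coe_lt_iff.2 hx'

lemma IsCompact.exists_forall_le_coe_of_upperSemicontinuousOn {α : Type*} [TopologicalSpace α]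
    {f : α → EReal} {s : Set α} (hs : IsCompact s) (hf : UpperSemicontinuousOn f s)
    (hlt : ∀ x ∈ s, f x < ⊤) : ∃ M : ℝ, ∀ x ∈ s, f x ≤ M := by
  rcases s.eq_empty_or_nonempty with rfl | hne
  · exact ⟨0, by simp⟩
  obtain ⟨a, ha, hmax⟩ := hf.exists_isMaxOn hne hs
  exact ⟨(f a).toReal, fun x hx => (hmax hx).trans (EReal.le_coe_toReal (hlt a ha).ne)⟩

lemma le_re_of_forall_mem_sphere_le_re {f : ℂ → ℂ} {c : ℂ} {r t : ℝ}
    (hf : DiffContOnCl ℂ f (ball c r)) (hr : 0 < r) (hsphere : ∀ z ∈ sphere c r, t ≤ (f z).re)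
    {z : ℂ} (hz : z ∈ closedBall c r) : t ≤ (f z).re := by
  -- maximum modulus principle for `exp (-f)`
  have hfrontier : ∀ x ∈ frontier (ball c r), ‖Complex.exp (-f x)‖ ≤ Real.exp (-t) := by
    rw [frontier_ball c hr.ne']
    intro x hx
    simpa [Complex.norm_exp] using hsphere x hx
  have hmax := Complex.norm_le_of_forall_mem_frontier_norm_le isBounded_ball
    ⟨hf.differentiableOn.neg.cexp, hf.continuousOn.neg.cexp⟩
    hfrontier (by rwa [closure_ball c hr.ne'])
  simpa [Complex.norm_exp] using hmax

namespace SubharmonicOn'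

lemma const {κ : EReal} (hκ : κ < ⊤) (U : Set ℂ) : SubharmonicOn' (fun _ => κ) U := by
  refine ⟨upperSemicontinuousOn_const, fun _ _ => hκ, fun c r hr _ p hp z hz => ?_⟩
  induction κ using EReal.rec with
  | bot => exact bot_le
  | coe t =>
    exact EReal.coe_le_coe_iff.2 <| le_re_of_forall_mem_sphere_le_re
      p.differentiable.diffContOnCl hr (fun ζ hζ => EReal.coe_le_coe_iff.1 (hp ζ hζ)) hz
  | top => exact absurd hκ (lt_irrefl ⊤)

lemma sub_coe {u : ℂ → EReal} {U : Set ℂ} (hu : SubharmonicOn' u U) (ε : ℝ) :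
    SubharmonicOn' (fun z => u z - ε) U := by
  obtain ⟨husc, hlt, hmax⟩ := hu
  refine ⟨husc.sub_coe ε, fun z hz => EReal.sub_coe_lt_iff.2 ?_, fun c r hr hU p hp z hz => ?_⟩
  · simpa using hlt z hz
  have hshift : ∀ ζ : ℂ, ((((p + Polynomial.C (ε : ℂ)).eval ζ).re : ℝ) : EReal)
      = ((p.eval ζ).re : EReal) + ε := fun ζ => by
    rw [← EReal.coe_add]
    simp
  rw [EReal.sub_coe_le_iff, ← hshift]
  exact hmax c r hr hU _ (fun ζ hζ => hshift ζ ▸ EReal.sub_coe_le_iff.1 (hp ζ hζ)) z hz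

end SubharmonicOn'

variable {m n k : ℕ}

namespace PshOn

lemma const {κ : EReal} (hκ : κ < ⊤) (U : Set (EuclideanSpace ℂ (Fin m))) :
    PshOn (fun _ => κ) U :=
  ⟨upperSemicontinuousOn_const, fun _ _ => hκ, fun _ _ _ => SubharmonicOn'.const hκ _⟩

lemma sub_coe {u : EuclideanSpace ℂ (Fin m) → EReal} {U : Set (EuclideanSpace ℂ (Fin m))}
    (hu : PshOn u U) (ε : ℝ) : PshOn (fun z => u z - ε) U :=
  ⟨hu.1.sub_coe ε, fun z hz => EReal.sub_coe_lt_iff.2 (by simpa using hu.2.1 z hz),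
    fun a b hb => (hu.2.2 a b hb).sub_coe ε⟩

lemma comp_affine {u : EuclideanSpace ℂ (Fin m) → EReal} (hu : PshOn u Set.univ)
    (c : EuclideanSpace ℂ (Fin m)) (L : EuclideanSpace ℂ (Fin k) →L[ℂ] EuclideanSpace ℂ (Fin m)) :
    PshOn (fun x => u (c + L x)) Set.univ := by
  have husc : UpperSemicontinuous u := upperSemicontinuousOn_univ_iff.1 hu.1
  refine ⟨upperSemicontinuousOn_univ_iff.2 (husc.comp (continuous_const.add L.continuous)),
    fun x _ => hu.2.1 _ trivial, fun a b _ => ?_⟩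
  have hline : (fun w : ℂ => u (c + L (a + w • b))) = fun w => u ((c + L a) + w • L b) := by
    simp only [map_add, map_smul, add_assoc]
  simp only [hline, Set.mem_univ, Set.ofPred_true]
  by_cases hLb : L b = 0
  · simpa [hLb] using SubharmonicOn'.const (hu.2.1 (c + L a) trivial) Set.univ
  · simpa using hu.2.2 (c + L a) (L b) hLb

end PshOn

namespace MinGrowth

lemma zero : MinGrowth (fun _ : EuclideanSpace ℂ (Fin m) => (0 : EReal)) :=
  ⟨PshOn.const EReal.zero_lt_top _, 0, 1, fun z hz => by
    simpa using Real.log_nonneg hz⟩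

lemma sub_coe {u : EuclideanSpace ℂ (Fin m) → EReal} (hu : MinGrowth u) (ε : ℝ) :
    MinGrowth (fun z => u z - ε) := by
  obtain ⟨hpsh, C, R₀, hC⟩ := hu
  refine ⟨hpsh.sub_coe ε, C - ε, R₀, fun z hz => EReal.sub_coe_le_iff.2 ?_⟩
  rw [← EReal.coe_add, add_assoc, sub_add_cancel]
  exact hC z hz

lemma comp_affine {u : EuclideanSpace ℂ (Fin m) → EReal} (hu : MinGrowth u)
    (c : EuclideanSpace ℂ (Fin m)) (L : EuclideanSpace ℂ (Fin k) →L[ℂ] EuclideanSpace ℂ (Fin m)) :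
    MinGrowth (fun x => u (c + L x)) := by
  obtain ⟨hpsh, C, R₀, hC⟩ := hu
  obtain ⟨M, hM⟩ := (isCompact_closedBall (0 : EuclideanSpace ℂ (Fin m)) (max R₀ 1))
    |>.exists_forall_le_coe_of_upperSemicontinuousOn (hpsh.1.mono (Set.subset_univ _))
      fun y _ => hpsh.2.1 y trivial
  set K := ‖c‖ + ‖L‖ + 1
  refine ⟨hpsh.comp_affine c L, max M (C + Real.log K), 1, fun x hx => ?_⟩
  have hlog_nonneg : 0 ≤ Real.log ‖x‖ := Real.log_nonneg hx
  rcases le_or_gt (max R₀ 1) ‖c + L x‖ with hfar | hnear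
  · have hpos : 0 < ‖c + L x‖ := one_pos.trans_le (le_of_max_le_right hfar)
    have hnorm : ‖c + L x‖ ≤ K * ‖x‖ :=
      calc ‖c + L x‖ ≤ ‖c‖ + ‖L‖ * ‖x‖ := (norm_add_le _ _).trans (by grw [L.le_opNorm x])
        _ ≤ K * ‖x‖ := by nlinarith [norm_nonneg c, norm_nonneg L]
    have hlog : Real.log ‖c + L x‖ ≤ Real.log ‖x‖ + Real.log K := by
      rw [← Real.log_mul (by positivity) (by positivity), mul_comm]
      exact Real.log_le_log hpos hnorm
    refine (hC _ (le_of_max_le_left hfar)).trans (EReal.coe_le_coe_iff.2 ?_)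
    linarith [le_max_right M (C + Real.log K)]
  · refine (hM _ (mem_closedBall_zero_iff.2 hnear.le)).trans (EReal.coe_le_coe_iff.2 ?_)
    linarith [le_max_left M (C + Real.log K)]

end MinGrowth

section GreenFunction

variable {E F : Set (EuclideanSpace ℂ (Fin m))} {u : EuclideanSpace ℂ (Fin m) → EReal}
  {z : EuclideanSpace ℂ (Fin m)}

lemma le_greenFn (hu : MinGrowth u) (hE : ∀ x ∈ E, u x ≤ 0) (z : EuclideanSpace ℂ (Fin m)) :
    u z ≤ greenFn E z :=
  le_sSup ⟨u, ⟨hu, hE⟩, rfl⟩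

lemma le_greenFn_add_coe (hu : MinGrowth u) {a : ℝ} (hE : ∀ x ∈ E, u x ≤ a)
    (z : EuclideanSpace ℂ (Fin m)) : u z ≤ greenFn E z + a :=
  EReal.sub_coe_le_iff.1 <|
    le_greenFn (hu.sub_coe a) (fun x hx => EReal.sub_coe_le_iff.2 (by simpa using hE x hx)) z

lemma greenFn_le {b : EReal} (h : ∀ u, MinGrowth u → (∀ x ∈ E, u x ≤ 0) → u z ≤ b) :
    greenFn E z ≤ b :=
  sSup_le <| by
    rintro _ ⟨u, ⟨hu, hE⟩, rfl⟩
    exact h u hu hE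

lemma greenFn_nonneg (E : Set (EuclideanSpace ℂ (Fin m))) (z : EuclideanSpace ℂ (Fin m)) :
    0 ≤ greenFn E z :=
  le_greenFn MinGrowth.zero (fun _ _ => le_rfl) z

lemma greenFn_anti (h : E ⊆ F) : greenFn F z ≤ greenFn E z :=
  greenFn_le fun _ hu hF => le_greenFn hu (fun x hx => hF x (h hx)) z

end GreenFunction

section Product

variable {E : Set (EuclideanSpace ℂ (Fin m))} {F : Set (EuclideanSpace ℂ (Fin n))}

lemma mem_prodSet_iff {ζ : EuclideanSpace ℂ (Fin (m + n))} :
    ζ ∈ prodSet E F ↔ (finAddEquivProd ζ).1 ∈ E ∧ (finAddEquivProd ζ).2 ∈ F :=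
  Iff.rfl

lemma norm_sq_eq_of_finAddEquivProd (ζ : EuclideanSpace ℂ (Fin (m + n))) :
    ‖ζ‖ ^ 2 = ‖(finAddEquivProd ζ).1‖ ^ 2 + ‖(finAddEquivProd ζ).2‖ ^ 2 := by
  conv_lhs => rw [← finAddEquivProd.symm_apply_apply ζ]
  simp [WithLp.prod_norm_sq_eq_of_L2]

lemma norm_fst_finAddEquivProd_le (ζ : EuclideanSpace ℂ (Fin (m + n))) :
    ‖(finAddEquivProd ζ).1‖ ≤ ‖ζ‖ := by
  have := norm_sq_eq_of_finAddEquivProd ζ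
  nlinarith [norm_nonneg ζ, norm_nonneg (finAddEquivProd ζ).1, norm_nonneg (finAddEquivProd ζ).2]

lemma norm_snd_finAddEquivProd_le (ζ : EuclideanSpace ℂ (Fin (m + n))) :
    ‖(finAddEquivProd ζ).2‖ ≤ ‖ζ‖ := by
  have := norm_sq_eq_of_finAddEquivProd ζ
  nlinarith [norm_nonneg ζ, norm_nonneg (finAddEquivProd ζ).1, norm_nonneg (finAddEquivProd ζ).2]

lemma norm_le_of_finAddEquivProd (ζ : EuclideanSpace ℂ (Fin (m + n))) :
    ‖ζ‖ ≤ ‖(finAddEquivProd ζ).1‖ + ‖(finAddEquivProd ζ).2‖ := by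
  have := norm_sq_eq_of_finAddEquivProd ζ
  nlinarith [norm_nonneg ζ, norm_nonneg (finAddEquivProd ζ).1, norm_nonneg (finAddEquivProd ζ).2]

lemma prodSet_inter_closedBall_subset (R : ℝ) :
    prodSet E F ∩ closedBall 0 R ⊆ prodSet (E ∩ closedBall 0 R) (F ∩ closedBall 0 R) :=
  fun ζ ⟨⟨hE, hF⟩, hR⟩ => by
    rw [mem_closedBall_zero_iff] at hR
    exact ⟨⟨hE, mem_closedBall_zero_iff.2 ((norm_fst_finAddEquivProd_le ζ).trans hR)⟩,
      ⟨hF, mem_closedBall_zero_iff.2 ((norm_snd_finAddEquivProd_le ζ).trans hR)⟩⟩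

lemma prodSet_closedBall_half_subset (R : ℝ) :
    prodSet (E ∩ closedBall 0 (R / 2)) (F ∩ closedBall 0 (R / 2)) ⊆ prodSet E F ∩ closedBall 0 R :=
  fun ζ hζ => by
    obtain ⟨⟨hE, hER⟩, hF, hFR⟩ := mem_prodSet_iff.1 hζ
    rw [mem_closedBall_zero_iff] at hER hFR
    exact ⟨⟨hE, hF⟩, mem_closedBall_zero_iff.2 ((norm_le_of_finAddEquivProd ζ).trans (by linarith))⟩

lemma MinGrowth.comp_fst_finAddEquivProd {u : EuclideanSpace ℂ (Fin m) → EReal}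
    (hu : MinGrowth u) :
    MinGrowth (fun ζ : EuclideanSpace ℂ (Fin (m + n)) => u (finAddEquivProd ζ).1) := by
  simpa using hu.comp_affine 0 (.fst ℂ _ _ ∘L (finAddEquivProd : _ ≃L[ℂ] _).toContinuousLinearMap)

lemma MinGrowth.comp_snd_finAddEquivProd {u : EuclideanSpace ℂ (Fin n) → EReal}
    (hu : MinGrowth u) :
    MinGrowth (fun ζ : EuclideanSpace ℂ (Fin (m + n)) => u (finAddEquivProd ζ).2) := by
  simpa using hu.comp_affine 0 (.snd ℂ _ _ ∘L (finAddEquivProd : _ ≃L[ℂ] _).toContinuousLinearMap)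

lemma MinGrowth.comp_finAddEquivProd_symm_left {u : EuclideanSpace ℂ (Fin (m + n)) → EReal}
    (hu : MinGrowth u) (w : EuclideanSpace ℂ (Fin n)) :
    MinGrowth (fun z => u (finAddEquivProd.symm (z, w))) := by
  convert hu.comp_affine (finAddEquivProd.symm (0, w))
    ((finAddEquivProd : _ ≃L[ℂ] _).symm.toContinuousLinearMap ∘L .inl ℂ _ _) using 3 with z
  change _ = finAddEquivProd.symm (0, w) + finAddEquivProd.symm (z, 0)
  rw [← map_add, Prod.mk_add_mk, zero_add, add_zero]

lemma MinGrowth.comp_finAddEquivProd_symm_right {u : EuclideanSpace ℂ (Fin (m + n)) → EReal}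
    (hu : MinGrowth u) (z : EuclideanSpace ℂ (Fin m)) :
    MinGrowth (fun w => u (finAddEquivProd.symm (z, w))) := by
  convert hu.comp_affine (finAddEquivProd.symm (z, 0))
    ((finAddEquivProd : _ ≃L[ℂ] _).symm.toContinuousLinearMap ∘L .inr ℂ _ _) using 3 with w
  change _ = finAddEquivProd.symm (z, 0) + finAddEquivProd.symm (0, w)
  rw [← map_add, Prod.mk_add_mk, zero_add, add_zero]

end Product

section ProductGreenFunction

variable {E : Set (EuclideanSpace ℂ (Fin m))} {F : Set (EuclideanSpace ℂ (Fin n))}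

lemma greenFn_fst_le_greenFn_prodSet (ζ : EuclideanSpace ℂ (Fin (m + n))) :
    greenFn E (finAddEquivProd ζ).1 ≤ greenFn (prodSet E F) ζ :=
  greenFn_le fun _ hu hE =>
    le_greenFn hu.comp_fst_finAddEquivProd (fun _ hξ => hE _ (mem_prodSet_iff.1 hξ).1) ζ

lemma greenFn_snd_le_greenFn_prodSet (ζ : EuclideanSpace ℂ (Fin (m + n))) :
    greenFn F (finAddEquivProd ζ).2 ≤ greenFn (prodSet E F) ζ :=
  greenFn_le fun _ hu hF =>
    le_greenFn hu.comp_snd_finAddEquivProd (fun _ hξ => hF _ (mem_prodSet_iff.1 hξ).2) ζ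

lemma greenFn_prodSet_le_add (ζ : EuclideanSpace ℂ (Fin (m + n))) :
    greenFn (prodSet E F) ζ ≤ greenFn E (finAddEquivProd ζ).1 + greenFn F (finAddEquivProd ζ).2 := by
  obtain ⟨⟨z, w⟩, rfl⟩ := finAddEquivProd.symm.surjective ζ
  simp only [ContinuousLinearEquiv.apply_symm_apply]
  refine greenFn_le fun u hu hEF => ?_
  have hslice : ∀ w' ∈ F, u (finAddEquivProd.symm (z, w')) ≤ greenFn E z := fun w' hw' =>
    le_greenFn (hu.comp_finAddEquivProd_symm_left w')
      (fun z' hz' => hEF _ (mem_prodSet_iff.2 (by simpa using ⟨hz', hw'⟩))) z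
  by_cases htop : greenFn E z = ⊤
  · rw [htop, EReal.top_add_of_ne_bot (ne_bot_of_le_ne_bot EReal.zero_ne_bot (greenFn_nonneg F w))]
    exact le_top
  rw [← EReal.coe_toReal htop (ne_bot_of_le_ne_bot EReal.zero_ne_bot (greenFn_nonneg E z))]
    at hslice ⊢
  rw [add_comm (_ : EReal)]
  exact le_greenFn_add_coe (hu.comp_finAddEquivProd_symm_right z) hslice w

lemma greenFn_inter_closedBall_fst_le (R : ℝ) (ζ : EuclideanSpace ℂ (Fin (m + n))) :
    greenFn (E ∩ closedBall 0 R) (finAddEquivProd ζ).1 ≤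
      greenFn (prodSet E F ∩ closedBall 0 R) ζ :=
  (greenFn_fst_le_greenFn_prodSet ζ).trans (greenFn_anti (prodSet_inter_closedBall_subset R))

lemma greenFn_inter_closedBall_snd_le (R : ℝ) (ζ : EuclideanSpace ℂ (Fin (m + n))) :
    greenFn (F ∩ closedBall 0 R) (finAddEquivProd ζ).2 ≤
      greenFn (prodSet E F ∩ closedBall 0 R) ζ :=
  (greenFn_snd_le_greenFn_prodSet ζ).trans (greenFn_anti (prodSet_inter_closedBall_subset R))

lemma greenFn_prodSet_inter_closedBall_le (R : ℝ) (ζ : EuclideanSpace ℂ (Fin (m + n))) :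
    greenFn (prodSet E F ∩ closedBall 0 R) ζ ≤
      greenFn (E ∩ closedBall 0 (R / 2)) (finAddEquivProd ζ).1 +
        greenFn (F ∩ closedBall 0 (R / 2)) (finAddEquivProd ζ).2 :=
  (greenFn_anti (prodSet_closedBall_half_subset R)).trans (greenFn_prodSet_le_add ζ)

end ProductGreenFunction

/-- **Lemma 1 b).** `E × F ⊆ ℂ^{m+n}` is non-thin at `∞` iff `E ⊆ ℂ^m` and `F ⊆ ℂ^n`
are both non-thin at `∞`. -/
theorem nonthinAtInfty_prod_iff {m n : ℕ}
    (E : Set (EuclideanSpace ℂ (Fin m))) (F : Set (EuclideanSpace ℂ (Fin n))) :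
    NonthinAtInfty (prodSet E F) ↔ NonthinAtInfty E ∧ NonthinAtInfty F := by
  constructor
  · intro h
    refine ⟨fun z => ?_, fun w => ?_⟩
    · refine tendsto_of_tendsto_of_tendsto_of_le_of_le tendsto_const_nhds
        (h (finAddEquivProd.symm (z, 0))) (fun R => greenFn_nonneg _ _) (fun R => ?_)
      simpa using greenFn_inter_closedBall_fst_le (F := F) R (finAddEquivProd.symm (z, 0))
    · refine tendsto_of_tendsto_of_tendsto_of_le_of_le tendsto_const_nhds
        (h (finAddEquivProd.symm (0, w))) (fun R => greenFn_nonneg _ _) (fun R => ?_)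
      simpa using greenFn_inter_closedBall_snd_le (E := E) R (finAddEquivProd.symm (0, w))
  · rintro ⟨hE, hF⟩ ζ
    have hsum : Tendsto (fun R => greenFn (E ∩ closedBall 0 R) (finAddEquivProd ζ).1 +
        greenFn (F ∩ closedBall 0 R) (finAddEquivProd ζ).2) atTop (nhds 0) := by
      simpa [Function.comp_def] using (EReal.continuousAt_add_coe_coe 0 0).tendsto.comp
        ((hE _).prodMk_nhds (hF _))
    exact tendsto_of_tendsto_of_tendsto_of_le_of_le tendsto_const_nhds
      (hsum.comp (tendsto_id.atTop_div_const two_pos)) (fun R => greenFn_nonneg _ _)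
      (fun R => greenFn_prodSet_inter_closedBall_le R ζ)

end
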